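/- arXiv:1210.6584 — 4 statements merged into one kernel-verified Lean document; each statement's English description precedes it below -/
import Mathlib

section
/- For every h ≥ 0, the abelianization of the genus-h surface group Γ_h is a free abelian group of rank 2h; that is, Γ_h^{ab} ≅ ℤ^{2h}. -/
open scoped commutatorElement

/-- The single relator `[a₁,b₁][a₂,b₂]⋯[a_h,b_h]` of the genus-`h` surface group, as an
element of the free group on `2h` generators `Fin h ⊕ Fin h` (the left summand giving the
`aᵢ` and the right summand the `bᵢ`). Here `⁅a, b⁆ = a * b * a⁻¹ * b⁻¹`. -/
def surfaceRelator (h : ℕ) : FreeGroup (Fin h ⊕ Fin h) :=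
  (List.ofFn fun i : Fin h =>
    ⁅FreeGroup.of (Sum.inl i : Fin h ⊕ Fin h), FreeGroup.of (Sum.inr i : Fin h ⊕ Fin h)⁆).prod

/-- The genus-`h` surface group `Γ_h`: the group presented on the `2h` generators
`a₁, b₁, …, a_h, b_h` with the single relator `[a₁,b₁][a₂,b₂]⋯[a_h,b_h]`. -/
def SurfaceGroup (h : ℕ) : Type :=
  PresentedGroup ({surfaceRelator h} : Set (FreeGroup (Fin h ⊕ Fin h)))

instance (h : ℕ) : Group (SurfaceGroup h) :=
  inferInstanceAs (Group (PresentedGroup _))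

section aux

variable (h : ℕ)

lemma relator_killed :
    ∀ r ∈ ({surfaceRelator h} : Set (FreeGroup (Fin h ⊕ Fin h))), FreeGroup.lift
      (fun x => Abelianization.of (FreeGroup.of x) :
        (Fin h ⊕ Fin h) → Abelianization (FreeGroup (Fin h ⊕ Fin h))) r = 1 := by
  intro r hr
  rcases hr with rfl
  rw [surfaceRelator, map_list_prod]
  simp only [List.map_ofFn]
  apply List.prod_eq_one
  intro x hx
  simp only [List.mem_ofFn] at hx
  obtain ⟨i, rfl⟩ := hx
  simp only [Function.comp_apply, map_commutatorElement]
  exact commutatorElement_eq_one_iff_commute.2 (Commute.all _ _)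

/-- Natural map. -/
noncomputable def φ : Abelianization (FreeGroup (Fin h ⊕ Fin h)) →* Abelianization (SurfaceGroup h) :=
  Abelianization.lift ((Abelianization.of).comp (PresentedGroup.mk _))

/-- Inverse map. -/
noncomputable def ψ : Abelianization (SurfaceGroup h) →* Abelianization (FreeGroup (Fin h ⊕ Fin h)) :=
  Abelianization.lift (PresentedGroup.toGroup (relator_killed h))

lemma psi_phi : (ψ h).comp (φ h) = MonoidHom.id _ := by
  apply Abelianization.hom_ext
  apply FreeGroup.ext_hom
  intro x
  simp [φ, ψ, PresentedGroup.toGroup.of]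
  rfl

lemma phi_surj : Function.Surjective (φ h) := by
  intro y
  induction y using QuotientGroup.induction_on with
  | H z =>
    induction z using QuotientGroup.induction_on with
    | H w => exact ⟨Abelianization.of w, rfl⟩

noncomputable def mainEquiv :
    Abelianization (FreeGroup (Fin h ⊕ Fin h)) ≃* Abelianization (SurfaceGroup h) :=
  MulEquiv.ofBijective (φ h)
    ⟨fun a b hab => by
      have := congrArg (ψ h) hab
      simpa [← MonoidHom.comp_apply, psi_phi h] using this,
     phi_surj h⟩

end aux

theorem stmt_3 (h : ℕ) :
    Nonempty (Additive (Abelianization (SurfaceGroup h)) ≃+ (Fin (2 * h) → ℤ)) := by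
  refine ⟨?_⟩
  have e1 : Additive (Abelianization (SurfaceGroup h)) ≃+
      FreeAbelianGroup (Fin h ⊕ Fin h) :=
    AddEquiv.symm (MulEquiv.toAdditiveRight (G := FreeAbelianGroup (Fin h ⊕ Fin h)) (mainEquiv h)).symm.symm
  have e2 : FreeAbelianGroup (Fin h ⊕ Fin h) ≃+ ((Fin h ⊕ Fin h) →₀ ℤ) :=
    FreeAbelianGroup.equivFinsupp _
  have e3 : ((Fin h ⊕ Fin h) →₀ ℤ) ≃+ (Fin (2 * h) →₀ ℤ) :=
    Finsupp.domCongr (finSumFinEquiv.trans (finCongr (by omega)))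
  have e4 : (Fin (2 * h) →₀ ℤ) ≃+ (Fin (2 * h) → ℤ) :=
    (Finsupp.linearEquivFunOnFinite ℤ ℤ _).toAddEquiv
  exact ((e1.trans e2).trans e3).trans e4
end

section
/- For every h ≥ 2 and every n ∈ ℕ, the genus-h surface group Γ_h contains a subgroup H of finite index with b₁(H) ≥ n. (The virtual first Betti number of Γ_h is infinite for h ≥ 2.) -/
open TensorProduct Function
open scoped commutatorElement

/-- The first Betti number of a group: the rank of the `ℚ`-vector space
`ℚ ⊗_ℤ G^{ab}`, where `G^{ab}` is the abelianization of `G`. -/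
noncomputable def groupFirstBetti (G : Type*) [Group G] : Cardinal :=
  Module.rank ℚ (ℚ ⊗[ℤ] (Additive (Abelianization G)))

/-! ### Auxiliary constructions -/

section Aux

variable (m : ℕ)

/-- The shift automorphism of `ZMod m → ℤ` by `k`. -/
def shiftEquiv (k : ZMod m) : (ZMod m → ℤ) ≃+ (ZMod m → ℤ) where
  toFun f i := f (i + k)
  invFun f i := f (i - k)
  left_inv f := by funext i; simp
  right_inv f := by funext i; simp
  map_add' f g := rfl

/-- The shift action of `Multiplicative (ZMod m)` by automorphisms. -/
def shiftHom : Multiplicative (ZMod m) →* MulAut (Multiplicative (ZMod m → ℤ)) :=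
  MonoidHom.mk' (fun k => AddEquiv.toMultiplicative (shiftEquiv m k.toAdd))
    (by
      intro a b
      apply MulEquiv.ext
      intro f
      show Multiplicative.ofAdd _ = Multiplicative.ofAdd _
      congr 1
      funext i
      show f.toAdd (i + (a.toAdd + b.toAdd)) = f.toAdd (i + a.toAdd + b.toAdd)
      rw [add_assoc])

/-- The target group: `ℤ^{ZMod m} ⋊ ZMod m` with the shift action. -/
abbrev ShiftGroup :=
  SemidirectProduct (Multiplicative (ZMod m → ℤ)) (Multiplicative (ZMod m)) (shiftHom m)

/-- First generator of the shift group. -/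
def sgX : ShiftGroup m :=
  SemidirectProduct.inl (Multiplicative.ofAdd (Pi.single (0 : ZMod m) (1 : ℤ)))

/-- Second generator of the shift group. -/
def sgY : ShiftGroup m := SemidirectProduct.inr (Multiplicative.ofAdd (1 : ZMod m))

lemma shiftHom_apply (k : Multiplicative (ZMod m)) (f : Multiplicative (ZMod m → ℤ)) :
    shiftHom m k f = Multiplicative.ofAdd (fun i => f.toAdd (i + k.toAdd)) := rfl

variable [NeZero m]

lemma sg_generates : Subgroup.closure ({sgX m, sgY m} : Set (ShiftGroup m)) = ⊤ := by
  classical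
  rw [eq_top_iff]
  intro q _
  have hX : sgX m ∈ Subgroup.closure ({sgX m, sgY m} : Set (ShiftGroup m)) :=
    Subgroup.subset_closure (by left; rfl)
  have hY : sgY m ∈ Subgroup.closure ({sgX m, sgY m} : Set (ShiftGroup m)) :=
    Subgroup.subset_closure (by right; rfl)
  set S := Subgroup.closure ({sgX m, sgY m} : Set (ShiftGroup m)) with hS
  have hinr : ∀ k : ZMod m,
      SemidirectProduct.inr (φ := shiftHom m) (Multiplicative.ofAdd k) ∈ S := by
    intro k
    have : Multiplicative.ofAdd k = (Multiplicative.ofAdd (1 : ZMod m)) ^ (k.val) := by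
      rw [← ofAdd_nsmul]
      congr 1
      rw [nsmul_eq_mul, mul_one, ZMod.natCast_val, ZMod.cast_id]
    rw [this, map_pow]
    exact pow_mem hY _
  have hsingle : ∀ c : ZMod m,
      SemidirectProduct.inl (φ := shiftHom m)
        (Multiplicative.ofAdd (Pi.single c (1 : ℤ))) ∈ S := by
    intro c
    have key := SemidirectProduct.inl_aut (φ := shiftHom m)
      (Multiplicative.ofAdd (-c)) (Multiplicative.ofAdd (Pi.single (0 : ZMod m) (1 : ℤ)))
    have harg : shiftHom m (Multiplicative.ofAdd (-c))
        (Multiplicative.ofAdd (Pi.single (0 : ZMod m) (1 : ℤ)))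
        = Multiplicative.ofAdd (Pi.single c (1 : ℤ)) := by
      rw [shiftHom_apply]
      congr 1
      funext i
      simp only [toAdd_ofAdd]
      rw [Pi.single_apply, Pi.single_apply, ← sub_eq_add_neg]
      simp only [sub_eq_zero]
    rw [harg] at key
    rw [key]
    refine S.mul_mem (S.mul_mem (hinr _) hX) ?_
    exact S.inv_mem (hinr _)
  have hinl : ∀ f : ZMod m → ℤ,
      SemidirectProduct.inl (φ := shiftHom m) (Multiplicative.ofAdd f) ∈ S := by
    let A : AddSubgroup (ZMod m → ℤ) :=
      { carrier := {f | SemidirectProduct.inl (φ := shiftHom m) (Multiplicative.ofAdd f) ∈ S}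
        zero_mem' := by
          show SemidirectProduct.inl (Multiplicative.ofAdd (0 : ZMod m → ℤ)) ∈ S
          have : Multiplicative.ofAdd (0 : ZMod m → ℤ) = 1 := rfl
          rw [this, map_one]
          exact S.one_mem
        add_mem' := by
          intro a b ha hb
          show SemidirectProduct.inl (Multiplicative.ofAdd (a + b)) ∈ S
          have : Multiplicative.ofAdd (a + b)
              = Multiplicative.ofAdd a * Multiplicative.ofAdd b := rfl
          rw [this, map_mul]
          exact S.mul_mem ha hb
        neg_mem' := by
          intro a ha
          show SemidirectProduct.inl (Multiplicative.ofAdd (-a)) ∈ S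
          have : Multiplicative.ofAdd (-a) = (Multiplicative.ofAdd a)⁻¹ := rfl
          rw [this, map_inv]
          exact S.inv_mem ha }
    intro f
    have hfA : f ∈ A := by
      rw [pi_eq_sum_univ f]
      refine AddSubgroup.sum_mem A fun i _ => AddSubgroup.zsmul_mem A ?_ _
      have : (fun j => if i = j then (1 : ℤ) else 0) = Pi.single i 1 := by
        funext j
        rw [Pi.single_apply]
        simp [eq_comm]
      rw [this]
      exact hsingle i
    exact hfA
  have hq : q = SemidirectProduct.inl q.left * SemidirectProduct.inr q.right :=
    (SemidirectProduct.inl_left_mul_inr_right q).symm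
  rw [hq]
  exact S.mul_mem (hinl _) (hinr _)

end Aux

section Betti

/-- If a group surjects onto `ℤ^{ZMod m}` then its first Betti number is at least `m`. -/
lemma le_betti_of_surjective {H : Type} [Group H] (m : ℕ) [NeZero m]
    (f : H →* Multiplicative (ZMod m → ℤ)) (hf : Surjective f) :
    (m : Cardinal) ≤ groupFirstBetti H := by
  classical
  let fab : Abelianization H →* Multiplicative (ZMod m → ℤ) := Abelianization.lift f
  have hfab : Surjective fab := fun x => by
    obtain ⟨y, hy⟩ := hf x
    exact ⟨Abelianization.of y, by simpa [fab] using hy⟩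
  let g : Additive (Abelianization H) →+ (ZMod m → ℤ) := MonoidHom.toAdditiveLeft fab
  have hg : Surjective g := by
    intro v
    obtain ⟨y, hy⟩ := hfab (Multiplicative.ofAdd v)
    exact ⟨Additive.ofMul y, by simp [g, MonoidHom.coe_toAdditiveLeft, hy]⟩
  let c : (ZMod m → ℤ) →+ (ZMod m → ℚ) := (Int.castAddHom ℚ).compLeft (ZMod m)
  let ℓ : Additive (Abelianization H) →ₗ[ℤ] (ZMod m → ℚ) := (c.comp g).toIntLinearMap
  let L : ℚ ⊗[ℤ] Additive (Abelianization H) →ₗ[ℚ] (ZMod m → ℚ) :=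
    LinearMap.liftBaseChange ℚ ℓ
  have hL : Surjective L := by
    rw [← LinearMap.range_eq_top, eq_top_iff]
    intro w _
    rw [pi_eq_sum_univ w]
    refine Submodule.sum_mem _ fun i _ => Submodule.smul_mem _ _ ?_
    obtain ⟨a, ha⟩ := hg (fun j => if i = j then (1 : ℤ) else 0)
    refine ⟨(1 : ℚ) ⊗ₜ[ℤ] a, ?_⟩
    rw [LinearMap.liftBaseChange_tmul, one_smul]
    show c (g a) = _
    rw [ha]
    funext j
    show ((if i = j then (1 : ℤ) else 0 : ℤ) : ℚ) = if i = j then (1 : ℚ) else 0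
    rw [apply_ite (fun z : ℤ => (z : ℚ))]
    norm_num
  have h1 : Module.rank ℚ (ZMod m → ℚ) = m := by
    rw [rank_fun']
    simp [ZMod.card]
  calc (m : Cardinal) = Module.rank ℚ (ZMod m → ℚ) := h1.symm
    _ ≤ Module.rank ℚ (ℚ ⊗[ℤ] Additive (Abelianization H)) := L.rank_le_of_surjective hL
    _ = groupFirstBetti H := rfl

end Betti

section Main

variable {h : ℕ}

/-- The assignment of generators for the map to the shift group. -/
def sgAssign (m : ℕ) : Fin h ⊕ Fin h → ShiftGroup m := fun s =>
  Sum.elim (fun i : Fin h => if i.val = 0 then sgX m else if i.val = 1 then sgY m else 1)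
    (fun i : Fin h => if i.val = 0 then sgY m else if i.val = 1 then sgX m else 1) s

lemma sgAssign_relator (m k : ℕ) :
    FreeGroup.lift (sgAssign (h := k + 2) m) (surfaceRelator (k + 2)) = 1 := by
  rw [surfaceRelator, map_list_prod, List.map_ofFn]
  have hcomp : (⇑(FreeGroup.lift (sgAssign (h := k + 2) m))) ∘
      (fun i : Fin (k + 2) =>
        ⁅FreeGroup.of (Sum.inl i : Fin (k+2) ⊕ Fin (k+2)),
          FreeGroup.of (Sum.inr i : Fin (k+2) ⊕ Fin (k+2))⁆)
      = fun i : Fin (k + 2) =>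
          ⁅sgAssign (h := k + 2) m (Sum.inl i), sgAssign (h := k + 2) m (Sum.inr i)⁆ := by
    funext i
    simp [Function.comp, commutatorElement_def, map_mul, map_inv]
  rw [hcomp]
  rw [List.ofFn_succ, List.ofFn_succ, List.prod_cons, List.prod_cons]
  have htail : (List.ofFn fun i : Fin k =>
      ⁅sgAssign (h := k + 2) m (Sum.inl i.succ.succ),
        sgAssign (h := k + 2) m (Sum.inr i.succ.succ)⁆).prod = 1 := by
    apply List.prod_eq_one
    intro x hx
    rw [List.mem_ofFn] at hx
    obtain ⟨i, rfl⟩ := hx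
    have hv : ((i.succ.succ : Fin (k + 2))).val = i.val + 2 := rfl
    have h1 : sgAssign (h := k + 2) m (Sum.inl i.succ.succ) = 1 := by
      simp only [sgAssign, Sum.elim_inl, hv]
      rw [if_neg (by omega), if_neg (by omega)]
    have h2 : sgAssign (h := k + 2) m (Sum.inr i.succ.succ) = 1 := by
      simp only [sgAssign, Sum.elim_inr, hv]
      rw [if_neg (by omega), if_neg (by omega)]
    show ⁅sgAssign (h := k + 2) m (Sum.inl i.succ.succ),
      sgAssign (h := k + 2) m (Sum.inr i.succ.succ)⁆ = 1
    rw [h1, h2]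
    simp
  rw [htail, mul_one]
  have h00 : sgAssign (h := k + 2) m (Sum.inl (0 : Fin (k+2))) = sgX m := by
    simp [sgAssign]
  have h01 : sgAssign (h := k + 2) m (Sum.inr (0 : Fin (k+2))) = sgY m := by
    simp [sgAssign]
  have h10 : sgAssign (h := k + 2) m (Sum.inl ((0 : Fin (k+1)).succ)) = sgY m := by
    simp [sgAssign, Fin.val_succ]
  have h11 : sgAssign (h := k + 2) m (Sum.inr ((0 : Fin (k+1)).succ)) = sgX m := by
    simp [sgAssign, Fin.val_succ]
  rw [h00, h01, h10, h11]
  group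

lemma sgAssign_inl0 (m k : ℕ) : sgAssign (h := k + 2) m (Sum.inl (0 : Fin (k+2))) = sgX m := by
  simp [sgAssign]

lemma sgAssign_inr0 (m k : ℕ) : sgAssign (h := k + 2) m (Sum.inr (0 : Fin (k+2))) = sgY m := by
  simp [sgAssign]

end Main

theorem stmt_5 (h : ℕ) (hh : 2 ≤ h) (n : ℕ) :
    ∃ H : Subgroup (SurfaceGroup h), H.FiniteIndex ∧
      (n : Cardinal) ≤ groupFirstBetti H := by
  obtain ⟨k, rfl⟩ : ∃ k, h = k + 2 := ⟨h - 2, by omega⟩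
  have hrel : ∀ r ∈ ({surfaceRelator (k + 2)} : Set (FreeGroup (Fin (k+2) ⊕ Fin (k+2)))),
      FreeGroup.lift (sgAssign (h := k + 2) (n + 1)) r = 1 := by
    rintro r rfl
    exact sgAssign_relator (n + 1) k
  let φΓ : SurfaceGroup (k + 2) →* ShiftGroup (n + 1) := PresentedGroup.toGroup hrel
  have hφsurj : Surjective φΓ := by
    rw [← MonoidHom.range_eq_top, eq_top_iff, ← sg_generates (n + 1), Subgroup.closure_le]
    rintro q (rfl | rfl)
    · exact ⟨PresentedGroup.of (Sum.inl (0 : Fin (k+2))),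
        (PresentedGroup.toGroup.of hrel (x := Sum.inl 0)).trans (sgAssign_inl0 (n+1) k)⟩
    · exact ⟨PresentedGroup.of (Sum.inr (0 : Fin (k+2))),
        (PresentedGroup.toGroup.of hrel (x := Sum.inr 0)).trans (sgAssign_inr0 (n+1) k)⟩
  let ψ : SurfaceGroup (k + 2) →* Multiplicative (ZMod (n + 1)) :=
    (SemidirectProduct.rightHom).comp φΓ
  refine ⟨ψ.ker, inferInstance, ?_⟩
  let ρ : ψ.ker →* Multiplicative (ZMod (n + 1) → ℤ) :=
    { toFun := fun g => (φΓ (g : SurfaceGroup (k + 2))).left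
      map_one' := by simp
      map_mul' := by
        rintro ⟨g₁, hg₁⟩ ⟨g₂, hg₂⟩
        have h1 : (φΓ g₁).right = 1 := hg₁
        show (φΓ (g₁ * g₂)).left = _
        rw [map_mul, SemidirectProduct.mul_left, h1, map_one]
        rfl }
  have hρ : Surjective ρ := by
    intro f
    obtain ⟨g, hg⟩ := hφsurj (SemidirectProduct.inl f)
    have hgker : g ∈ ψ.ker := by
      show SemidirectProduct.rightHom (φΓ g) = 1
      rw [hg, SemidirectProduct.rightHom_inl]
    exact ⟨⟨g, hgker⟩, by show (φΓ g).left = f; rw [hg, SemidirectProduct.left_inl]⟩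
  have hbetti := le_betti_of_surjective (n + 1) ρ hρ
  refine le_trans ?_ hbetti
  exact_mod_cast Nat.cast_le.mpr (Nat.le_succ n)
end

section
/- Let h ≥ 2 and let G be a group admitting a surjective homomorphism φ : G → Γ_h onto the genus-h surface group. Then for every n ∈ ℕ there exists a subgroup H ≤ G of finite index with b₁(H) ≥ n. (In particular, the fundamental group of any surface bundle over a closed orientable surface of genus h ≥ 2 has infinite virtual first Betti number.) -/
open TensorProduct Function
open scoped commutatorElement

/-- The shift of coordinates on `ℤ^{ℤ/m}`, as an additive automorphism. -/
private def shiftA (m : ℕ) (k : ZMod m) : (ZMod m → ℤ) ≃+ (ZMod m → ℤ) where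
  toFun f i := f (i - k)
  invFun f i := f (i + k)
  left_inv f := funext fun i => by simp
  right_inv f := funext fun i => by simp
  map_add' f g := rfl

/-- The shift action of `ℤ/m` on `ℤ^{ℤ/m}` (multiplicatively written). -/
private def shiftAct (m : ℕ) : Multiplicative (ZMod m) →* MulAut (Multiplicative (ZMod m → ℤ)) where
  toFun k := AddEquiv.toMultiplicative (shiftA m k.toAdd)
  map_one' := by
    refine MulEquiv.ext fun f => ?_
    show Multiplicative.ofAdd (shiftA m (0 : ZMod m) f.toAdd) = f
    refine Multiplicative.toAdd.injective (funext fun i => ?_)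
    simp [shiftA]
  map_mul' k l := by
    refine MulEquiv.ext fun f => ?_
    refine Multiplicative.toAdd.injective (funext fun i => ?_)
    show f.toAdd (i - (k.toAdd + l.toAdd)) = f.toAdd (i - k.toAdd - l.toAdd)
    rw [sub_sub]

private lemma shift_single (m : ℕ) (jv : ℕ) (c : ℤ) :
    (shiftAct m (Multiplicative.ofAdd (1 : ZMod m) ^ jv))
        (Multiplicative.ofAdd (Pi.single (0 : ZMod m) (1 : ℤ)) ^ c)
      = Multiplicative.ofAdd (Pi.single ((jv : ZMod m)) c) := by
  classical
  rw [← ofAdd_zsmul, ← ofAdd_nsmul]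
  show Multiplicative.ofAdd (shiftA m (Multiplicative.ofAdd (jv • (1 : ZMod m))).toAdd
      (c • Pi.single (0 : ZMod m) (1 : ℤ))) = Multiplicative.ofAdd (Pi.single ((jv : ZMod m)) c)
  congr 1
  funext i
  rw [toAdd_ofAdd]
  simp [shiftA, Pi.single_apply, sub_eq_zero, nsmul_eq_mul]

/-- Images of the generators of the surface group in the wreath-like group
`ℤ^{ℤ/m} ⋊ ℤ/m`: `a₁` maps to the shift, `a₂` to the standard basis vector `e₀`,
and everything else to `1`. -/
private def genMap (h m : ℕ) :
    Fin h ⊕ Fin h → Multiplicative (ZMod m → ℤ) ⋊[shiftAct m] Multiplicative (ZMod m)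
  | Sum.inl i =>
      if i.val = 0 then SemidirectProduct.inr (Multiplicative.ofAdd (1 : ZMod m))
      else if i.val = 1 then
        SemidirectProduct.inl (Multiplicative.ofAdd (Pi.single (0 : ZMod m) (1 : ℤ)))
      else 1
  | Sum.inr _ => 1

private lemma genMap_rel (h m : ℕ) :
    ∀ r ∈ ({surfaceRelator h} : Set (FreeGroup (Fin h ⊕ Fin h))),
      FreeGroup.lift (genMap h m) r = 1 := by
  intro r hr
  rw [Set.mem_singleton_iff] at hr
  subst hr
  rw [surfaceRelator, map_list_prod, List.map_ofFn]
  apply List.prod_eq_one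
  intro x hx
  rw [List.mem_ofFn] at hx
  obtain ⟨i, rfl⟩ := hx
  show (FreeGroup.lift (genMap h m)) ⁅FreeGroup.of (Sum.inl i), FreeGroup.of (Sum.inr i)⁆ = 1
  rw [commutatorElement_def, map_mul, map_mul, map_mul, map_inv, map_inv,
    FreeGroup.lift_apply_of, FreeGroup.lift_apply_of]
  have : genMap h m (Sum.inr i) = 1 := rfl
  rw [this]
  group

/-- Taking the `N`-component is a homomorphism on the kernel of the projection
of a semidirect product to `G`, pulled back along `Ψ`. -/
private def kerLeft {m : ℕ} {G : Type} [Group G]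
    (Ψ : G →* Multiplicative (ZMod m → ℤ) ⋊[shiftAct m] Multiplicative (ZMod m)) :
    (SemidirectProduct.rightHom.comp Ψ).ker →* Multiplicative (ZMod m → ℤ) where
  toFun g := (Ψ g.1).left
  map_one' := by simp
  map_mul' x y := by
    have hx : (Ψ (x : G)).right = 1 := x.2
    show (Ψ ((x : G) * (y : G))).left = _
    rw [map_mul, SemidirectProduct.mul_left, hx, map_one]
    simp

/-- A group surjecting onto `ℤ^{ℤ/m}` has first Betti number at least `m`. -/
private lemma betti_ge (m : ℕ) [NeZero m] {H : Type} [Group H]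
    (f : H →* Multiplicative (ZMod m → ℤ)) (hf : Surjective f) :
    (m : Cardinal) ≤ Module.rank ℚ (ℚ ⊗[ℤ] (Additive (Abelianization H))) := by
  let f' : Abelianization H →* Multiplicative (ZMod m → ℤ) := Abelianization.lift f
  have hf' : Surjective f' := by
    intro x
    obtain ⟨y, hy⟩ := hf x
    exact ⟨Abelianization.of y, by simpa [f'] using hy⟩
  let g : Additive (Abelianization H) →+ (ZMod m → ℤ) :=
    AddMonoidHom.mk' (fun x => (f' x.toMul).toAdd) (fun x y => by
      show (f' (x.toMul * y.toMul)).toAdd = _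
      rw [map_mul]; rfl)
  have hg : Surjective g := fun x => by
    obtain ⟨y, hy⟩ := hf' (Multiplicative.ofAdd x)
    exact ⟨Additive.ofMul y, by simp [g, hy]⟩
  let g2 := LinearMap.baseChange ℚ g.toIntLinearMap
  have hg2 : Surjective g2 := by
    rw [show (g2 : ℚ ⊗[ℤ] (Additive (Abelianization H)) → ℚ ⊗[ℤ] (ZMod m → ℤ)) =
      g.toIntLinearMap.lTensor ℚ from rfl]
    exact LinearMap.lTensor_surjective ℚ hg
  have hle := LinearMap.rank_le_of_surjective g2 hg2
  refine le_trans (le_of_eq ?_) hle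
  rw [Module.rank_baseChange, rank_fun']
  simp [ZMod.card]

theorem stmt_6 (h : ℕ) (hh : 2 ≤ h) (G : Type) [Group G]
    (φ : G →* SurfaceGroup h) (hφ : Surjective φ) (n : ℕ) :
    ∃ H : Subgroup G, H.FiniteIndex ∧ (n : Cardinal) ≤ groupFirstBetti H := by
  classical
  have h0 : (0 : ℕ) < h := by omega
  have h1 : (1 : ℕ) < h := by omega
  set m := n + 1 with hmdef
  haveI : NeZero m := ⟨Nat.succ_ne_zero n⟩
  let χ : PresentedGroup ({surfaceRelator h} : Set (FreeGroup (Fin h ⊕ Fin h))) →*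
      Multiplicative (ZMod m → ℤ) ⋊[shiftAct m] Multiplicative (ZMod m) :=
    PresentedGroup.toGroup (genMap_rel h m)
  let Ψ : G →* Multiplicative (ZMod m → ℤ) ⋊[shiftAct m] Multiplicative (ZMod m) :=
    χ.comp φ
  refine ⟨(SemidirectProduct.rightHom.comp Ψ).ker, Subgroup.finiteIndex_ker _, ?_⟩
  -- every `ofAdd (Pi.single j c)` is in the range of `kerLeft Ψ`
  have hsingle : ∀ (j : ZMod m) (c : ℤ),
      Multiplicative.ofAdd (Pi.single j c) ∈ (kerLeft Ψ).range := by
    intro j c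
    obtain ⟨g, hg⟩ := hφ
      ((PresentedGroup.of (Sum.inl (⟨0, h0⟩ : Fin h))) ^ j.val *
       (PresentedGroup.of (Sum.inl (⟨1, h1⟩ : Fin h))) ^ c *
       ((PresentedGroup.of (Sum.inl (⟨0, h0⟩ : Fin h))) ^ j.val)⁻¹)
    have ha0 : χ (PresentedGroup.of (Sum.inl (⟨0, h0⟩ : Fin h))) =
        SemidirectProduct.inr (Multiplicative.ofAdd (1 : ZMod m)) := by
      show PresentedGroup.toGroup (genMap_rel h m) (PresentedGroup.of _) = _
      rw [PresentedGroup.toGroup.of]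
      rfl
    have ha1 : χ (PresentedGroup.of (Sum.inl (⟨1, h1⟩ : Fin h))) =
        SemidirectProduct.inl (Multiplicative.ofAdd (Pi.single (0 : ZMod m) (1 : ℤ))) := by
      show PresentedGroup.toGroup (genMap_rel h m) (PresentedGroup.of _) = _
      rw [PresentedGroup.toGroup.of]
      rfl
    have hΨ : Ψ g = SemidirectProduct.inl
        (Multiplicative.ofAdd (Pi.single ((j.val : ZMod m)) c)) := by
      show χ (φ g) = _
      rw [hg]
      show χ ((PresentedGroup.of (Sum.inl (⟨0, h0⟩ : Fin h))) ^ j.val *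
        (PresentedGroup.of (Sum.inl (⟨1, h1⟩ : Fin h))) ^ c *
        ((PresentedGroup.of (Sum.inl (⟨0, h0⟩ : Fin h))) ^ j.val)⁻¹) = _
      rw [map_mul, map_mul, map_inv, map_pow, map_zpow, ha0, ha1,
        ← map_pow, ← map_zpow, ← map_inv, ← SemidirectProduct.inl_aut, shift_single]
    have hker : g ∈ (SemidirectProduct.rightHom.comp Ψ).ker := by
      rw [MonoidHom.mem_ker, MonoidHom.comp_apply, hΨ, SemidirectProduct.rightHom_inl]
    refine ⟨⟨g, hker⟩, ?_⟩
    show (Ψ g).left = _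
    rw [hΨ, SemidirectProduct.left_inl, ZMod.natCast_rightInverse j]
  -- hence `kerLeft Ψ` is surjective
  have hsur : Surjective (kerLeft Ψ) := by
    intro x
    suffices hx : x ∈ (kerLeft Ψ).range by exact hx
    have hxe : x = ∏ j : ZMod m, Multiplicative.ofAdd (Pi.single j (x.toAdd j)) := by
      rw [← ofAdd_sum, Finset.univ_sum_single, ofAdd_toAdd]
    rw [hxe]
    exact Subgroup.prod_mem _ fun j _ => hsingle j (x.toAdd j)
  have hbetti := betti_ge m (kerLeft Ψ) hsur
  unfold groupFirstBetti
  refine le_trans ?_ hbetti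
  exact_mod_cast Nat.le_succ n
end

section
/- Let G be a group containing a normal subgroup N with N ≅ ℤ × ℤ and G/N ≅ ℤ × ℤ. Then every finite-index subgroup H of G satisfies b₁(H) ≤ 4. (In particular, the fundamental group of a T² bundle over T², or of an S¹ bundle over a torus bundle over S¹, has all virtual Betti numbers b₁ bounded by 4, showing these exceptions in the Main Theorem are necessary.) -/
open TensorProduct Function

instance : Module.Flat ℤ ℚ := IsLocalization.flat ℚ (nonZeroDivisors ℤ)

/-- Rank bound for exact sequences of vector spaces. -/
lemma rank_le_of_exact_vs {K A B C : Type} [Field K] [AddCommGroup A] [AddCommGroup B]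
    [AddCommGroup C] [Module K A] [Module K B] [Module K C]
    (f : A →ₗ[K] B) (g : B →ₗ[K] C) (h : Function.Exact f g) :
    Module.rank K B ≤ Module.rank K A + Module.rank K C := by
  have h1 := Submodule.rank_quotient_add_rank (LinearMap.ker g)
  have h2 : Module.rank K (B ⧸ LinearMap.ker g) ≤ Module.rank K C := by
    have e := (g.quotKerEquivRange).toLinearMap.rank_le_of_injective g.quotKerEquivRange.injective
    exact e.trans (Submodule.rank_le _)
  have h3 : Module.rank K (LinearMap.ker g) ≤ Module.rank K A := by
    rw [LinearMap.exact_iff.mp h]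
    have := f.rangeRestrict.rank_le_of_surjective f.surjective_rangeRestrict
    exact this
  calc Module.rank K B = Module.rank K (B ⧸ LinearMap.ker g) + Module.rank K (LinearMap.ker g) :=
        h1.symm
    _ ≤ Module.rank K A + Module.rank K C := by
        rw [add_comm]; exact add_le_add h3 h2

lemma rank_tensor_le_of_exact {A B C : Type} [AddCommGroup A] [AddCommGroup B] [AddCommGroup C]
    (f : A →ₗ[ℤ] B) (g : B →ₗ[ℤ] C) (h : Function.Exact f g) :
    Module.rank ℚ (ℚ ⊗[ℤ] B) ≤ Module.rank ℚ (ℚ ⊗[ℤ] A) + Module.rank ℚ (ℚ ⊗[ℤ] C) := by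
  have hex : Function.Exact (f.baseChange ℚ) (g.baseChange ℚ) := by
    have := Module.Flat.lTensor_exact ℚ h
    rwa [← f.baseChange_eq_ltensor, ← g.baseChange_eq_ltensor] at this
  exact rank_le_of_exact_vs _ _ hex

lemma rank_tensor_le_of_injective {A B : Type} [AddCommGroup A] [AddCommGroup B]
    (f : A →ₗ[ℤ] B) (hf : Function.Injective f) :
    Module.rank ℚ (ℚ ⊗[ℤ] A) ≤ Module.rank ℚ (ℚ ⊗[ℤ] B) := by
  have hinj : Function.Injective (f.baseChange ℚ) := by
    have := Module.Flat.lTensor_preserves_injective_linearMap (M := ℚ) f hf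
    rwa [← f.baseChange_eq_ltensor] at this
  exact (f.baseChange ℚ).rank_le_of_injective hinj

lemma rank_tensor_ZxZ : Module.rank ℚ (ℚ ⊗[ℤ] (ℤ × ℤ)) = 2 := by
  rw [Module.rank_baseChange]
  rw [Cardinal.lift_id, rank_prod', Module.rank_self]
  exact one_add_one_eq_two

theorem stmt_9 {G : Type} [Group G] (N : Subgroup G) [N.Normal]
    (hN : Nonempty (N ≃* Multiplicative (ℤ × ℤ)))
    (hQ : Nonempty (G ⧸ N ≃* Multiplicative (ℤ × ℤ)))
    (H : Subgroup G) (hH : H.FiniteIndex) :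
    groupFirstBetti H ≤ 4 := by
  obtain ⟨e⟩ := hN
  obtain ⟨q⟩ := hQ
  have hNcomm : ∀ x y : N, x * y = y * x := fun x y =>
    e.injective (by rw [map_mul, map_mul, mul_comm])
  letI : CommGroup (G ⧸ N) :=
    { (inferInstance : Group (G ⧸ N)) with
      mul_comm := fun x y => q.injective (by rw [map_mul, map_mul, mul_comm]) }
  set M : Subgroup H := N.subgroupOf H with hM
  letI : CommGroup M :=
    { (inferInstance : Group M) with
      mul_comm := fun a b => by
        have h := hNcomm ⟨(a : H), a.2⟩ ⟨(b : H), b.2⟩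
        have h2 : ((a : H) : G) * ((b : H) : G) = ((b : H) : G) * ((a : H) : G) :=
          congrArg Subtype.val h
        refine Subtype.ext (Subtype.ext ?_)
        exact h2 }
  -- the maps
  let φ : H →* G ⧸ N := (QuotientGroup.mk' N).comp H.subtype
  let g0 : Abelianization H →* G ⧸ N := Abelianization.lift φ
  let j0 : M →* Abelianization H := (Abelianization.of).comp M.subtype
  let fZ : Additive M →ₗ[ℤ] Additive (Abelianization H) :=
    (MonoidHom.toAdditive j0).toIntLinearMap
  let gZ : Additive (Abelianization H) →ₗ[ℤ] ℤ × ℤ :=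
    ((AddEquiv.additiveMultiplicative (ℤ × ℤ)).toAddMonoidHom.comp
      (MonoidHom.toAdditive (q.toMonoidHom.comp g0))).toIntLinearMap
  -- exactness
  have hgz : ∀ z : Additive (Abelianization H),
      gZ z = Multiplicative.toAdd (q (g0 (Additive.toMul z))) := fun _ => rfl
  have hkey : ∀ z : Additive (Abelianization H),
      gZ z = 0 ↔ q (g0 (Additive.toMul z)) = 1 := by
    intro z
    rw [hgz]
    constructor
    · intro h; exact Multiplicative.toAdd.injective h
    · intro h; rw [h]; rfl
  have hex : Function.Exact fZ gZ := by
    intro y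
    obtain ⟨x, hx⟩ := QuotientGroup.mk_surjective (Additive.toMul y : Abelianization H)
    rw [hkey]
    have hx' : Abelianization.of x = Additive.toMul y := hx
    constructor
    · intro h0
      have h2 : φ x = 1 := by
        have h1 : q (g0 (Abelianization.of x)) = 1 := by rw [hx']; exact h0
        have h1' : q (g0 (Abelianization.of x)) = q 1 := by rw [map_one]; exact h1
        have h1'' := q.injective h1'
        simpa [g0, Abelianization.lift_apply_of] using h1''
      have hxm : (x : G) ∈ N := by
        rw [← QuotientGroup.eq_one_iff (x : G)]
        exact h2
      refine ⟨Additive.ofMul (⟨x, hxm⟩ : M), ?_⟩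
      show Additive.ofMul (j0 ⟨x, hxm⟩) = y
      have : j0 ⟨x, hxm⟩ = Abelianization.of x := rfl
      rw [this, hx']
      rfl
    · rintro ⟨m, hm⟩
      have hfm : fZ m = Additive.ofMul (j0 (Additive.toMul m)) := rfl
      have hmem : φ ((Additive.toMul m : M) : H) = 1 := by
        have hmm : (((Additive.toMul m : M) : H) : G) ∈ N := (Additive.toMul m).2
        simpa [φ, QuotientGroup.eq_one_iff] using hmm
      have hg : g0 (j0 (Additive.toMul m)) = 1 := by
        simpa [g0, j0, Abelianization.lift_apply_of] using hmem
      have : Additive.toMul y = j0 (Additive.toMul m) := by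
        rw [← hm, hfm]; rfl
      rw [this, hg, map_one]
  -- injection of M into ℤ × ℤ
  let ι0 : M →* N :=
    { toFun := fun m => ⟨((m : H) : G), m.2⟩
      map_one' := rfl
      map_mul' := fun _ _ => rfl }
  let ιZ : Additive M →ₗ[ℤ] ℤ × ℤ :=
    ((AddEquiv.additiveMultiplicative (ℤ × ℤ)).toAddMonoidHom.comp
      (MonoidHom.toAdditive (e.toMonoidHom.comp ι0))).toIntLinearMap
  have hι : Function.Injective ιZ := by
    intro a b hab
    have hz : ∀ z : Additive M, ιZ z = Multiplicative.toAdd (e (ι0 (Additive.toMul z))) :=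
      fun _ => rfl
    rw [hz, hz] at hab
    have h1 : e (ι0 (Additive.toMul a)) = e (ι0 (Additive.toMul b)) :=
      Multiplicative.toAdd.injective hab
    have h2 : ι0 (Additive.toMul a) = ι0 (Additive.toMul b) := e.injective h1
    have hG := congrArg (Subtype.val : N → G) h2
    have h4 : ((Additive.toMul a : M) : H) = ((Additive.toMul b : M) : H) :=
      @Subtype.ext _ _ ((Additive.toMul a : M) : H) ((Additive.toMul b : M) : H) hG
    have h3 : (Additive.toMul a : M) = Additive.toMul b := Subtype.ext h4
    exact Additive.toMul.injective h3
  -- rank bounds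
  have bM : Module.rank ℚ (ℚ ⊗[ℤ] Additive M) ≤ 2 := by
    rw [← rank_tensor_ZxZ]
    exact rank_tensor_le_of_injective ιZ hι
  have main := rank_tensor_le_of_exact fZ gZ hex
  rw [rank_tensor_ZxZ] at main
  have : groupFirstBetti H ≤ 2 + 2 := by
    unfold groupFirstBetti
    exact main.trans (add_le_add_left bM 2)
  refine this.trans ?_
  norm_num
end
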